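/- With the metric of Theorem 3.2 on ℝ⁶ (g(∂x,∂x)=-2(yz₁+f(y)z₂), other components as stated) and f'' > 0, define ker(R) = {η : R(ξ₁,ξ₂,ξ₃,η)=0 for all ξᵢ}. Then at each point, ker(R) = span{∂z₂ - f'(y)∂z₁ + (combination of ∂ỹ, ∂x̃ terms), ∂x̃, ∂ỹ}; in particular ker(R) is 3-dimensional and contains ∂x̃ and ∂ỹ. -/

import Mathlib

open scoped BigOperators

namespace Stmt19

/-- The metric `g¹_{6,f}` on `ℝ⁶` in coordinates `(x, y, z₁, z₂, ỹ, x̃)`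
(indices `0,…,5`). -/
def g (f : ℝ → ℝ) (p : Fin 6 → ℝ) : Fin 6 → Fin 6 → ℝ := fun i j =>
  if i = 0 ∧ j = 0 then -2 * (p 1 * p 2 + f (p 1) * p 3)
  else if (i = 0 ∧ j = 5) ∨ (i = 5 ∧ j = 0) then 1
  else if (i = 1 ∧ j = 4) ∨ (i = 4 ∧ j = 1) then 1
  else if (i = 2 ∧ j = 2) ∨ (i = 3 ∧ j = 3) then 1
  else 0

/-- Partial derivative in the `i`-th coordinate direction. -/
noncomputable def pd (i : Fin 6) (h : (Fin 6 → ℝ) → ℝ) (p : Fin 6 → ℝ) : ℝ :=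
  fderiv ℝ h p (Pi.single i 1)

/-- Curvature `R_{ijk}{}^l` of the connection with Christoffel symbols `Γ`. -/
noncomputable def Rup (Γ : (Fin 6 → ℝ) → Fin 6 → Fin 6 → Fin 6 → ℝ)
    (p : Fin 6 → ℝ) (i j k l : Fin 6) : ℝ :=
  pd i (fun q => Γ q j k l) p - pd j (fun q => Γ q i k l) p
    + (∑ n : Fin 6, Γ p i n l * Γ p j k n) - ∑ n : Fin 6, Γ p j n l * Γ p i k n

/-- Fully lowered curvature tensor `R(∂ᵢ,∂ⱼ,∂ₖ,∂ₗ)`. -/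
noncomputable def Rlow (f : ℝ → ℝ) (Γ : (Fin 6 → ℝ) → Fin 6 → Fin 6 → Fin 6 → ℝ)
    (p : Fin 6 → ℝ) (i j k l : Fin 6) : ℝ :=
  ∑ n : Fin 6, Rup Γ p i j k n * g f p n l

/-- The curvature tensor as a quadrilinear map `R(ξ₁,ξ₂,ξ₃,ξ₄)`. -/
noncomputable def R4 (f : ℝ → ℝ) (Γ : (Fin 6 → ℝ) → Fin 6 → Fin 6 → Fin 6 → ℝ)
    (p : Fin 6 → ℝ) (ξ₁ ξ₂ ξ₃ ξ₄ : Fin 6 → ℝ) : ℝ :=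
  ∑ i : Fin 6, ∑ j : Fin 6, ∑ k : Fin 6, ∑ l : Fin 6,
    ξ₁ i * ξ₂ j * ξ₃ k * ξ₄ l * Rlow f Γ p i j k l

end Stmt19

open Stmt19

noncomputable def sng (a : Fin 6) : Fin 6 → ℝ := Pi.single a 1

lemma hproj (k : Fin 6) (q : Fin 6 → ℝ) : HasFDerivAt (fun r : Fin 6 → ℝ => r k)
    (ContinuousLinearMap.proj (R := ℝ) (φ := fun _ : Fin 6 => ℝ) k) q := by
  exact (ContinuousLinearMap.proj (R := ℝ) (φ := fun _ : Fin 6 => ℝ) k).hasFDerivAt (x := q)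

lemma pd_const (a : Fin 6) (q : Fin 6 → ℝ) (c : ℝ) : pd a (fun _ => c) q = 0 := by
  simp [pd]

lemma pd_hasF (a : Fin 6) {h : (Fin 6 → ℝ) → ℝ} {q : Fin 6 → ℝ}
    {L : (Fin 6 → ℝ) →L[ℝ] ℝ} (H : HasFDerivAt h L q) :
    pd a h q = L (Pi.single a 1) := by
  rw [pd, H.fderiv]

lemma pd_proj (a k : Fin 6) (q : Fin 6 → ℝ) :
    pd a (fun r => r k) q = sng a k := by
  rw [pd_hasF a (hproj k q)]; simp [sng]

lemma pd_f1 (f : ℝ → ℝ) (hf : Differentiable ℝ f) (a : Fin 6) (q : Fin 6 → ℝ) :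
    pd a (fun r => f (r 1)) q = deriv f (q 1) * sng a 1 := by
  have hfd : HasDerivAt f (deriv f (q 1)) (q 1) := (hf (q 1)).hasDerivAt
  have h : HasFDerivAt (fun r : Fin 6 → ℝ => f (r 1))
      (deriv f (q 1) • ContinuousLinearMap.proj (R := ℝ) (φ := fun _ : Fin 6 => ℝ) 1) q :=
    hfd.comp_hasFDerivAt q (hproj 1 q)
  rw [pd_hasF a h]; simp [sng]

open scoped ContDiff in
lemma diff_deriv (f : ℝ → ℝ) (hf : ContDiff ℝ (⊤ : ℕ∞) f) : Differentiable ℝ (deriv f) := by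
  have h1 : ContDiff ℝ ∞ f := hf.of_le (by simp)
  exact (contDiff_infty_iff_deriv.mp h1).2.differentiable (by simp)

lemma pd_df1 (f : ℝ → ℝ) (hf : ContDiff ℝ (⊤ : ℕ∞) f) (a : Fin 6) (q : Fin 6 → ℝ) :
    pd a (fun r => deriv f (r 1)) q = deriv (deriv f) (q 1) * sng a 1 :=
  pd_f1 (deriv f) (diff_deriv f hf) a q

lemma hA4 (f : ℝ → ℝ) (hf : ContDiff ℝ (⊤ : ℕ∞) f) (q : Fin 6 → ℝ) :
    HasFDerivAt (fun r : Fin 6 → ℝ => r 2 + deriv f (r 1) * r 3)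
      (ContinuousLinearMap.proj (R := ℝ) (φ := fun _ : Fin 6 => ℝ) 2
        + ((q 3 * deriv (deriv f) (q 1)) • ContinuousLinearMap.proj (R := ℝ) (φ := fun _ : Fin 6 => ℝ) 1
          + deriv f (q 1) • ContinuousLinearMap.proj (R := ℝ) (φ := fun _ : Fin 6 => ℝ) 3)) q := by
  have h1 : HasFDerivAt (fun r : Fin 6 → ℝ => deriv f (r 1))
      (deriv (deriv f) (q 1) • ContinuousLinearMap.proj (R := ℝ) (φ := fun _ : Fin 6 => ℝ) 1) q :=
    by have hd := (diff_deriv f hf (q 1)).hasDerivAt; exact hd.comp_hasFDerivAt q (hproj 1 q)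
  have h2 := h1.mul (hproj 3 q)
  have h3 := (hproj 2 q).add h2
  refine h3.congr_fderiv ?_
  module

lemma pd_A4 (f : ℝ → ℝ) (hf : ContDiff ℝ (⊤ : ℕ∞) f) (a : Fin 6) (q : Fin 6 → ℝ) :
    pd a (fun r => r 2 + deriv f (r 1) * r 3) q
      = sng a 2 + (q 3 * deriv (deriv f) (q 1) * sng a 1 + deriv f (q 1) * sng a 3) := by
  rw [pd_hasF a (hA4 f hf q)]; simp [sng]

lemma hA (f : ℝ → ℝ) (hf : ContDiff ℝ (⊤ : ℕ∞) f) (q : Fin 6 → ℝ) :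
    HasFDerivAt (fun r : Fin 6 → ℝ => -2 * (r 1 * r 2 + f (r 1) * r 3))
      ((-2 : ℝ) • ((q 2 • ContinuousLinearMap.proj (R := ℝ) (φ := fun _ : Fin 6 => ℝ) 1
          + q 1 • ContinuousLinearMap.proj (R := ℝ) (φ := fun _ : Fin 6 => ℝ) 2)
        + (q 3 * deriv f (q 1)) • ContinuousLinearMap.proj (R := ℝ) (φ := fun _ : Fin 6 => ℝ) 1
          + f (q 1) • ContinuousLinearMap.proj (R := ℝ) (φ := fun _ : Fin 6 => ℝ) 3)) q := by
  have h1 : HasFDerivAt (fun r : Fin 6 → ℝ => f (r 1))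
      (deriv f (q 1) • ContinuousLinearMap.proj (R := ℝ) (φ := fun _ : Fin 6 => ℝ) 1) q :=
    by have hd := (hf.differentiable (by simp) (q 1)).hasDerivAt; exact hd.comp_hasFDerivAt q (hproj 1 q)
  have h2 := ((hproj 1 q).mul (hproj 2 q)).add (h1.mul (hproj 3 q))
  have h3 := h2.const_mul (-2 : ℝ)
  refine h3.congr_fderiv ?_
  module

lemma pd_A (f : ℝ → ℝ) (hf : ContDiff ℝ (⊤ : ℕ∞) f) (a : Fin 6) (q : Fin 6 → ℝ) :
    pd a (fun r => -2 * (r 1 * r 2 + f (r 1) * r 3)) q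
      = -2 * ((q 2 * sng a 1 + q 1 * sng a 2)
          + q 3 * deriv f (q 1) * sng a 1 + f (q 1) * sng a 3) := by
  rw [pd_hasF a (hA f hf q)]; simp [sng]; ring

noncomputable def V (f : ℝ → ℝ) (q : Fin 6 → ℝ) (a : Fin 6) : ℝ :=
  if a = 1 then -2 * (q 2 + deriv f (q 1) * q 3)
  else if a = 2 then -2 * q 1
  else if a = 3 then -2 * f (q 1) else 0

lemma pdg (f : ℝ → ℝ) (hf : ContDiff ℝ (⊤ : ℕ∞) f) (a c d : Fin 6) (q : Fin 6 → ℝ) :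
    pd a (fun r => g f r c d) q = if c = 0 ∧ d = 0 then V f q a else 0 := by
  by_cases h : c = 0 ∧ d = 0
  · obtain ⟨rfl, rfl⟩ := h
    have hfun : (fun r => g f r 0 0) = fun r : Fin 6 → ℝ => -2 * (r 1 * r 2 + f (r 1) * r 3) := by
      funext r; simp [g]
    rw [hfun, pd_A f hf a q, if_pos ⟨rfl, rfl⟩, V]
    by_cases h1 : a = 1
    · subst h1; simp [sng]; ring
    by_cases h2 : a = 2
    · subst h2; simp [sng, h1]
    by_cases h3 : a = 3
    · subst h3; simp [sng, h1, h2]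
    · have s1 : sng a 1 = 0 := Pi.single_eq_of_ne (fun h => h1 h.symm) 1
      have s2 : sng a 2 = 0 := Pi.single_eq_of_ne (fun h => h2 h.symm) 1
      have s3 : sng a 3 = 0 := Pi.single_eq_of_ne (fun h => h3 h.symm) 1
      simp [s1, s2, s3, h1, h2, h3]
  · have hfun : (fun r => g f r c d) = fun _ : Fin 6 → ℝ => g f q c d := by
      funext r; simp only [g, if_neg h]
    rw [hfun, pd_const, if_neg h]

noncomputable def G0 (f : ℝ → ℝ) (q : Fin 6 → ℝ) (i j l : Fin 6) : ℝ :=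
  if l = 2 then (if i = 0 ∧ j = 0 then q 1 else 0)
  else if l = 3 then (if i = 0 ∧ j = 0 then f (q 1) else 0)
  else if l = 4 then (if i = 0 ∧ j = 0 then q 2 + deriv f (q 1) * q 3 else 0)
  else if l = 5 then ((if j = 0 then V f q i else 0) + (if i = 0 then V f q j else 0)) / 2
  else 0

lemma V0 (f : ℝ → ℝ) (q : Fin 6 → ℝ) : V f q 0 = 0 := by simp [V]
lemma V4 (f : ℝ → ℝ) (q : Fin 6 → ℝ) : V f q 4 = 0 := by simp [V]
lemma V5 (f : ℝ → ℝ) (q : Fin 6 → ℝ) : V f q 5 = 0 := by simp [V]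

lemma master (f : ℝ → ℝ) (hf : ContDiff ℝ (⊤ : ℕ∞) f)
    (Γ : (Fin 6 → ℝ) → Fin 6 → Fin 6 → Fin 6 → ℝ)
    (hKoszul : ∀ p i j c, (∑ l : Fin 6, Γ p i j l * Stmt19.g f p l c) =
      (Stmt19.pd i (fun q => Stmt19.g f q j c) p
        + Stmt19.pd j (fun q => Stmt19.g f q i c) p
        - Stmt19.pd c (fun q => Stmt19.g f q i j) p) / 2) :
    ∀ q i j l, Γ q i j l = G0 f q i j l := by
  intro q i j l
  have h0 : Γ q i j 0 = 0 := by
    have e := hKoszul q i j 5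
    simp only [pdg f hf] at e
    simp [Fin.sum_univ_six, g, V5] at e
    exact e
  have h1 : Γ q i j 1 = 0 := by
    have e := hKoszul q i j 4
    simp only [pdg f hf] at e
    simp [Fin.sum_univ_six, g, V4] at e
    exact e
  have h2 : Γ q i j 2 = if i = 0 ∧ j = 0 then q 1 else 0 := by
    have e := hKoszul q i j 2
    simp only [pdg f hf] at e
    simp [Fin.sum_univ_six, g] at e
    rw [e]
    by_cases hij : i = 0 ∧ j = 0
    · simp [hij, V]
    · simp [hij]
  have h3 : Γ q i j 3 = if i = 0 ∧ j = 0 then f (q 1) else 0 := by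
    have e := hKoszul q i j 3
    simp only [pdg f hf] at e
    simp [Fin.sum_univ_six, g] at e
    rw [e]
    by_cases hij : i = 0 ∧ j = 0
    · simp [hij, V]
    · simp [hij]
  have h4 : Γ q i j 4 = if i = 0 ∧ j = 0 then q 2 + deriv f (q 1) * q 3 else 0 := by
    have e := hKoszul q i j 1
    simp only [pdg f hf] at e
    simp [Fin.sum_univ_six, g] at e
    rw [e]
    by_cases hij : i = 0 ∧ j = 0
    · simp [hij, V]
    · simp [hij]
  have h5 : Γ q i j 5 =
      ((if j = 0 then V f q i else 0) + (if i = 0 then V f q j else 0)) / 2 := by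
    have e := hKoszul q i j 0
    simp only [pdg f hf] at e
    simp [Fin.sum_univ_six, g, V0, h0] at e
    rw [e]
  fin_cases l <;> simp [G0, h0, h1, h2, h3, h4, h5]

section helpers
variable (f : ℝ → ℝ) (hf : ContDiff ℝ (⊤ : ℕ∞) f)
variable (Γ : (Fin 6 → ℝ) → Fin 6 → Fin 6 → Fin 6 → ℝ)
variable (hΓ : ∀ q i j l, Γ q i j l = G0 f q i j l)
variable (p : Fin 6 → ℝ)

include hΓ

lemma hz0 : ∀ (q : Fin 6 → ℝ) (a b : Fin 6), Γ q a b 0 = 0 := by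
  intro q a b; rw [hΓ]; simp [G0]

lemma hz1 : ∀ (q : Fin 6 → ℝ) (a b : Fin 6), Γ q a b 1 = 0 := by
  intro q a b; rw [hΓ]; simp [G0]

lemma Rup_0 : ∀ i j k, Rup Γ p i j k 0 = 0 := by
  intro i j k
  simp [Rup, hz0 f Γ hΓ, pd_const]

lemma Rup_1 : ∀ i j k, Rup Γ p i j k 1 = 0 := by
  intro i j k
  simp [Rup, hz1 f Γ hΓ, pd_const]

include hf

lemma key2 : ∀ (a b c : Fin 6),
    pd a (fun q => Γ q b c 2) p = if b = 0 ∧ c = 0 then sng a 1 else 0 := by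
  intro a b c
  by_cases h : b = 0 ∧ c = 0
  · rw [show (fun q => Γ q b c 2) = fun q : Fin 6 → ℝ => q 1 from
      funext fun q => by rw [hΓ]; simp [G0, h], pd_proj, if_pos h]
  · rw [show (fun q => Γ q b c 2) = fun _ : Fin 6 → ℝ => (0:ℝ) from
      funext fun q => by rw [hΓ]; simp [G0, h], pd_const, if_neg h]

lemma key3 : ∀ (a b c : Fin 6),
    pd a (fun q => Γ q b c 3) p = if b = 0 ∧ c = 0 then deriv f (p 1) * sng a 1 else 0 := by
  intro a b c
  by_cases h : b = 0 ∧ c = 0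
  · rw [show (fun q => Γ q b c 3) = fun q : Fin 6 → ℝ => f (q 1) from
      funext fun q => by rw [hΓ]; simp [G0, h],
      pd_f1 f (hf.differentiable (by simp)) a p, if_pos h]
  · rw [show (fun q => Γ q b c 3) = fun _ : Fin 6 → ℝ => (0:ℝ) from
      funext fun q => by rw [hΓ]; simp [G0, h], pd_const, if_neg h]

omit hf

lemma quad2 : ∀ (a b c : Fin 6), (∑ n : Fin 6, Γ p a n 2 * Γ p b c n) = 0 := by
  intro a b c
  simp [Fin.sum_univ_six, hz0 f Γ hΓ, hΓ, G0]

lemma quad3 : ∀ (a b c : Fin 6), (∑ n : Fin 6, Γ p a n 3 * Γ p b c n) = 0 := by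
  intro a b c
  simp [Fin.sum_univ_six, hz0 f Γ hΓ, hΓ, G0]

include hf

lemma Rup_32 : ∀ i j k, Rup Γ p i j k 3 = deriv f (p 1) * Rup Γ p i j k 2 := by
  intro i j k
  rw [Rup, Rup, key2 f hf Γ hΓ p, key2 f hf Γ hΓ p, key3 f hf Γ hΓ p, key3 f hf Γ hΓ p,
    quad2 f Γ hΓ p, quad3 f Γ hΓ p, quad2 f Γ hΓ p, quad3 f Γ hΓ p]
  by_cases h1 : j = 0 ∧ k = 0 <;> by_cases h2 : i = 0 ∧ k = 0 <;> simp [h1, h2] <;> split_ifs <;> ring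

end helpers

lemma pd_negproj (a k : Fin 6) (q : Fin 6 → ℝ) :
    pd a (fun r => -(r k)) q = -(sng a k) := by
  have H : HasFDerivAt (fun r : Fin 6 → ℝ => -(r k)) _ q := (hproj k q).neg
  have := pd_hasF a H
  simp only [this]; simp [sng]

lemma pd_negA4 (f : ℝ → ℝ) (hf : ContDiff ℝ (⊤ : ℕ∞) f) (a : Fin 6) (q : Fin 6 → ℝ) :
    pd a (fun r => -(r 2 + deriv f (r 1) * r 3)) q
      = -(sng a 2 + (q 3 * deriv (deriv f) (q 1) * sng a 1 + deriv f (q 1) * sng a 3)) := by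
  have H : HasFDerivAt (fun r : Fin 6 → ℝ => -(r 2 + deriv f (r 1) * r 3)) _ q := (hA4 f hf q).neg
  have := pd_hasF a H
  simp only [this]; simp [sng]

section concrete
set_option linter.unusedSectionVars false
variable (f : ℝ → ℝ) (hf : ContDiff ℝ (⊤ : ℕ∞) f)
variable (Γ : (Fin 6 → ℝ) → Fin 6 → Fin 6 → Fin 6 → ℝ)
variable (hΓ : ∀ q i j l, Γ q i j l = G0 f q i j l)
variable (p : Fin 6 → ℝ)
include hf hΓ

lemma Rup2002 : Rup Γ p 2 0 0 2 = 0 := by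
  rw [Rup, key2 f hf Γ hΓ p, key2 f hf Γ hΓ p, quad2 f Γ hΓ p, quad2 f Γ hΓ p]
  simp [sng, Pi.single_apply]

lemma Rup2004 : Rup Γ p 2 0 0 4 = 1 := by
  have F004 : (fun q => Γ q 0 0 4) = fun q : Fin 6 → ℝ => q 2 + deriv f (q 1) * q 3 := by
    funext q; rw [hΓ]; simp [G0]
  have F204 : (fun q => Γ q 2 0 4) = fun _ : Fin 6 → ℝ => (0:ℝ) := by
    funext q; rw [hΓ]; simp [G0]
  rw [Rup, F004, F204, pd_A4 f hf 2 p, pd_const]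
  simp [Fin.sum_univ_six, hΓ, G0, V, sng, Pi.single_apply]

lemma Rup2005 : Rup Γ p 2 0 0 5 = 0 := by
  have F005 : (fun q => Γ q 0 0 5) = fun _ : Fin 6 → ℝ => (0:ℝ) := by
    funext q; rw [hΓ]; simp [G0, V]
  have F205 : (fun q => Γ q 2 0 5) = fun q : Fin 6 → ℝ => -(q 1) := by
    funext q; rw [hΓ]; simp [G0, V]; ring
  rw [Rup, F005, F205, pd_const, pd_negproj]
  simp [Fin.sum_univ_six, hΓ, G0, V, sng, Pi.single_apply]

lemma Rup2012 : Rup Γ p 2 0 1 2 = 0 := by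
  rw [Rup, key2 f hf Γ hΓ p, key2 f hf Γ hΓ p, quad2 f Γ hΓ p, quad2 f Γ hΓ p]
  simp

lemma Rup2014 : Rup Γ p 2 0 1 4 = 0 := by
  have F014 : (fun q => Γ q 0 1 4) = fun _ : Fin 6 → ℝ => (0:ℝ) := by
    funext q; rw [hΓ]; simp [G0]
  have F214 : (fun q => Γ q 2 1 4) = fun _ : Fin 6 → ℝ => (0:ℝ) := by
    funext q; rw [hΓ]; simp [G0]
  rw [Rup, F014, F214, pd_const, pd_const]
  simp [Fin.sum_univ_six, hΓ, G0, V, sng, Pi.single_apply]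

lemma Rup2015 : Rup Γ p 2 0 1 5 = -1 := by
  have F015 : (fun q => Γ q 0 1 5) = fun q : Fin 6 → ℝ => -(q 2 + deriv f (q 1) * q 3) := by
    funext q; rw [hΓ]; simp [G0, V]; ring
  have F215 : (fun q => Γ q 2 1 5) = fun _ : Fin 6 → ℝ => (0:ℝ) := by
    funext q; rw [hΓ]; simp [G0, V]
  rw [Rup, F015, F215, pd_negA4 f hf 2 p, pd_const]
  simp [Fin.sum_univ_six, hΓ, G0, V, sng, Pi.single_apply]

lemma Rup1002 : Rup Γ p 1 0 0 2 = 1 := by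
  rw [Rup, key2 f hf Γ hΓ p, key2 f hf Γ hΓ p, quad2 f Γ hΓ p, quad2 f Γ hΓ p]
  simp [sng, Pi.single_apply]

lemma Rup1004 : Rup Γ p 1 0 0 4 = p 3 * deriv (deriv f) (p 1) := by
  have F004 : (fun q => Γ q 0 0 4) = fun q : Fin 6 → ℝ => q 2 + deriv f (q 1) * q 3 := by
    funext q; rw [hΓ]; simp [G0]
  have F104 : (fun q => Γ q 1 0 4) = fun _ : Fin 6 → ℝ => (0:ℝ) := by
    funext q; rw [hΓ]; simp [G0]
  rw [Rup, F004, F104, pd_A4 f hf 1 p, pd_const]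
  simp [Fin.sum_univ_six, hΓ, G0, V, sng, Pi.single_apply]

lemma Rup1005 : Rup Γ p 1 0 0 5 = 0 := by
  have F005 : (fun q => Γ q 0 0 5) = fun _ : Fin 6 → ℝ => (0:ℝ) := by
    funext q; rw [hΓ]; simp [G0, V]
  have F105 : (fun q => Γ q 1 0 5) = fun q : Fin 6 → ℝ => -(q 2 + deriv f (q 1) * q 3) := by
    funext q; rw [hΓ]; simp [G0, V]; ring
  rw [Rup, F005, F105, pd_const, pd_negA4 f hf 0 p]
  simp [Fin.sum_univ_six, hΓ, G0, V, sng, Pi.single_apply]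

lemma Rl200 (l : Fin 6) : Rlow f Γ p 2 0 0 l = g f p 4 l := by
  rw [Rlow, Fin.sum_univ_six, Rup_0 f Γ hΓ p, Rup_1 f Γ hΓ p, Rup2002 f hf Γ hΓ p,
    Rup_32 f hf Γ hΓ p, Rup2002 f hf Γ hΓ p, Rup2004 f hf Γ hΓ p, Rup2005 f hf Γ hΓ p]
  ring

lemma Rl201 (l : Fin 6) : Rlow f Γ p 2 0 1 l = -(g f p 5 l) := by
  rw [Rlow, Fin.sum_univ_six, Rup_0 f Γ hΓ p, Rup_1 f Γ hΓ p, Rup2012 f hf Γ hΓ p,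
    Rup_32 f hf Γ hΓ p, Rup2012 f hf Γ hΓ p, Rup2014 f hf Γ hΓ p, Rup2015 f hf Γ hΓ p]
  ring

lemma Rl100 (l : Fin 6) : Rlow f Γ p 1 0 0 l
    = g f p 2 l + deriv f (p 1) * g f p 3 l + p 3 * deriv (deriv f) (p 1) * g f p 4 l := by
  rw [Rlow, Fin.sum_univ_six, Rup_0 f Γ hΓ p, Rup_1 f Γ hΓ p, Rup1002 f hf Γ hΓ p,
    Rup_32 f hf Γ hΓ p, Rup1002 f hf Γ hΓ p, Rup1004 f hf Γ hΓ p, Rup1005 f hf Γ hΓ p]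
  ring

lemma Rlow5 (i j k : Fin 6) : Rlow f Γ p i j k 5 = 0 := by
  rw [Rlow, Fin.sum_univ_six]
  simp [g, Rup_0 f Γ hΓ p]

lemma Rlow4 (i j k : Fin 6) : Rlow f Γ p i j k 4 = 0 := by
  rw [Rlow, Fin.sum_univ_six]
  simp [g, Rup_1 f Γ hΓ p]

lemma Rlow_v (i j k : Fin 6) :
    Rlow f Γ p i j k 3 = deriv f (p 1) * Rlow f Γ p i j k 2 := by
  rw [Rlow, Rlow, Fin.sum_univ_six, Fin.sum_univ_six, Rup_32 f hf Γ hΓ p]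
  simp [g]

end concrete

/-- For the metric `g¹_{6,f}` with `f'' > 0`, at each point `P` the kernel
`ker R = {η : R(ξ₁,ξ₂,ξ₃,η) = 0 ∀ ξᵢ}` equals
`span{∂z₂ - f'(y)∂z₁, ∂x̃, ∂ỹ}`; in particular it is 3-dimensional and contains
`∂x̃` and `∂ỹ`. -/
theorem stmt_19 (f : ℝ → ℝ) (hf : ContDiff ℝ (⊤ : ℕ∞) f)
    (hconv : ∀ y : ℝ, iteratedDeriv 2 f y > 0)
    (Γ : (Fin 6 → ℝ) → Fin 6 → Fin 6 → Fin 6 → ℝ)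
    (hΓsym : ∀ p i j k, Γ p i j k = Γ p j i k)
    (hΓsmooth : ∀ i j k, ContDiff ℝ (⊤ : ℕ∞) (fun p => Γ p i j k))
    (hKoszul : ∀ p i j c, (∑ l : Fin 6, Γ p i j l * Stmt19.g f p l c) =
      (Stmt19.pd i (fun q => Stmt19.g f q j c) p
        + Stmt19.pd j (fun q => Stmt19.g f q i c) p
        - Stmt19.pd c (fun q => Stmt19.g f q i j) p) / 2)
    (p : Fin 6 → ℝ)
    (K : Submodule ℝ (Fin 6 → ℝ))
    (hK : (K : Set (Fin 6 → ℝ)) =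
      {η | ∀ ξ₁ ξ₂ ξ₃ : Fin 6 → ℝ, Stmt19.R4 f Γ p ξ₁ ξ₂ ξ₃ η = 0}) :
    K = Submodule.span ℝ
        ({(Pi.single 3 1 : Fin 6 → ℝ) - deriv f (p 1) • (Pi.single 2 1 : Fin 6 → ℝ),
          (Pi.single 5 1 : Fin 6 → ℝ), (Pi.single 4 1 : Fin 6 → ℝ)} :
          Set (Fin 6 → ℝ)) ∧
    Module.finrank ℝ K = 3 ∧
    (Pi.single 5 1 : Fin 6 → ℝ) ∈ K ∧ (Pi.single 4 1 : Fin 6 → ℝ) ∈ K := by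
  have hΓm : ∀ q i j l, Γ q i j l = G0 f q i j l := master f hf Γ hKoszul
  set v1 : Fin 6 → ℝ :=
    (Pi.single 3 1 : Fin 6 → ℝ) - deriv f (p 1) • (Pi.single 2 1 : Fin 6 → ℝ) with hv1
  have hmem : ∀ η : Fin 6 → ℝ, η ∈ K ↔ ∀ ξ₁ ξ₂ ξ₃, R4 f Γ p ξ₁ ξ₂ ξ₃ η = 0 := by
    intro η
    rw [← SetLike.mem_coe, hK]; exact Iff.rfl
  have me5 : (Pi.single 5 1 : Fin 6 → ℝ) ∈ K := by
    rw [hmem]; intro ξ1 ξ2 ξ3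
    rw [R4]
    refine Finset.sum_eq_zero fun i _ => Finset.sum_eq_zero fun j _ =>
      Finset.sum_eq_zero fun k _ => ?_
    rw [Fin.sum_univ_six]
    simp [Pi.single_apply, Rlow5 f hf Γ hΓm p]
  have me4 : (Pi.single 4 1 : Fin 6 → ℝ) ∈ K := by
    rw [hmem]; intro ξ1 ξ2 ξ3
    rw [R4]
    refine Finset.sum_eq_zero fun i _ => Finset.sum_eq_zero fun j _ =>
      Finset.sum_eq_zero fun k _ => ?_
    rw [Fin.sum_univ_six]
    simp [Pi.single_apply, Rlow4 f hf Γ hΓm p]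
  have mv1 : v1 ∈ K := by
    rw [hmem]; intro ξ1 ξ2 ξ3
    rw [R4]
    refine Finset.sum_eq_zero fun i _ => Finset.sum_eq_zero fun j _ =>
      Finset.sum_eq_zero fun k _ => ?_
    rw [Fin.sum_univ_six]
    simp [hv1, Pi.single_apply, Rlow_v f hf Γ hΓm p]
    ring
  have hcond : ∀ η ∈ K, η 0 = 0 ∧ η 1 = 0 ∧ η 2 + deriv f (p 1) * η 3 = 0 := by
    intro η hη
    rw [hmem] at hη
    have A := hη (Pi.single 2 1) (Pi.single 0 1) (Pi.single 0 1)
    simp [R4, Fin.sum_univ_six, Pi.single_apply, Rl200 f hf Γ hΓm p, g] at A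
    have B := hη (Pi.single 2 1) (Pi.single 0 1) (Pi.single 1 1)
    simp [R4, Fin.sum_univ_six, Pi.single_apply, Rl201 f hf Γ hΓm p, g] at B
    have C := hη (Pi.single 1 1) (Pi.single 0 1) (Pi.single 0 1)
    simp [R4, Fin.sum_univ_six, Pi.single_apply, Rl100 f hf Γ hΓm p, g] at C
    refine ⟨B, A, ?_⟩
    rw [A] at C
    linear_combination C
  have hspan : K = Submodule.span ℝ
      ({v1, (Pi.single 5 1 : Fin 6 → ℝ), (Pi.single 4 1 : Fin 6 → ℝ)} : Set (Fin 6 → ℝ)) := by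
    apply le_antisymm
    · intro η hη
      obtain ⟨B, A, C⟩ := hcond η hη
      have hrep : η = η 3 • v1 + η 4 • (Pi.single 4 1 : Fin 6 → ℝ)
          + η 5 • (Pi.single 5 1 : Fin 6 → ℝ) := by
        funext a
        fin_cases a <;>
          simp [hv1, Pi.single_apply] <;> linarith
      rw [hrep]
      refine Submodule.add_mem _ (Submodule.add_mem _ ?_ ?_) ?_ <;>
        exact Submodule.smul_mem _ _ (Submodule.subset_span (by simp))
    · rw [Submodule.span_le]
      rintro x (rfl | rfl | rfl)
      · exact mv1
      · exact me5
      · exact me4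
  have hrange : Set.range ![v1, (Pi.single 5 1 : Fin 6 → ℝ), (Pi.single 4 1 : Fin 6 → ℝ)]
      = ({v1, (Pi.single 5 1 : Fin 6 → ℝ), (Pi.single 4 1 : Fin 6 → ℝ)} : Set (Fin 6 → ℝ)) := by
    ext y
    constructor
    · rintro ⟨i, rfl⟩; fin_cases i <;> simp
    · rintro (rfl | rfl | rfl)
      exacts [⟨0, rfl⟩, ⟨1, rfl⟩, ⟨2, rfl⟩]
  have hli : LinearIndependent ℝ ![v1, (Pi.single 5 1 : Fin 6 → ℝ), (Pi.single 4 1 : Fin 6 → ℝ)] := by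
    rw [Fintype.linearIndependent_iff]
    intro c hc
    have h3 := congrFun hc 3
    have h4 := congrFun hc 4
    have h5 := congrFun hc 5
    simp [Fin.sum_univ_three, hv1, Pi.single_apply, Matrix.vecHead, Matrix.vecTail] at h3 h4 h5
    intro i; fin_cases i <;> simp [h3, h4, h5]
  have hrank : Module.finrank ℝ K = 3 := by
    rw [hspan, ← hrange, finrank_span_eq_card hli]
    simp
  exact ⟨hspan, hrank, me5, me4⟩
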